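/- Let A ∈ ℝ^{m×n}, b ∈ ℝ^m, e the all-ones vector in ℝ^m, and define ζ = min { bᵀ w : 0 ≤ w ≤ e, Aᵀ w = 0 }. Then the feasible set of this linear program is nonempty and compact, the minimum ζ is attained, and ζ ≤ 0. Moreover, ζ < 0 if and only if the system A z ≤ b has no solution. -/

import Mathlib

/-!
The feasible set is the unit box cut by the subspace `Aᵀ w = 0`, hence compact, and it contains
`w = 0`; so the minimum `ζ` is attained and `ζ ≤ 0`. A feasible `w` with `bᵀ w < 0` rules out
`A z ≤ b`, because then `0 ≤ (b - A z)ᵀ w = bᵀ w`. Conversely, if `A z ≤ b` has no solution,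
Farkas' lemma (proved algebraically, after Bartl, by induction on the number of constraints)
gives `y ≥ 0` with `Aᵀ y = 0` and `bᵀ y = -1`, and a positive multiple of `y` lies in the box.
-/

open Matrix

theorem Finset.sum_insert_update_mul {R ι : Type*} [NonUnitalNonAssocSemiring R] [DecidableEq ι]
    {s : Finset ι} {j : ι} (hj : j ∉ s) (y : ι → R) (c : R) (g : ι → R) :
    ∑ i ∈ insert j s, Function.update y j c i * g i = c * g j + ∑ i ∈ s, y i * g i := by
  rw [Finset.sum_insert hj, Function.update_self]
  congr 1
  exact Finset.sum_congr rfl fun i hi => by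
    rw [Function.update_of_ne (ne_of_mem_of_not_mem hi hj)]

section Farkas

variable {𝕜 W ι : Type*} [Field 𝕜] [LinearOrder 𝕜] [IsStrictOrderedRing 𝕜]
  [AddCommGroup W] [Module 𝕜 W]

/- If the constraint `a j` is not needed, drop it; otherwise a witness `x₀` of that yields the
projection `P` onto `ker (a j)` along `x₀`, and composing everything with `P` removes `a j`. -/
theorem exists_nonneg_eq_sum_of_forall_nonneg [DecidableEq ι] (s : Finset ι)
    (a : ι → W →ₗ[𝕜] 𝕜) (f : W →ₗ[𝕜] 𝕜) (h : ∀ x, (∀ i ∈ s, 0 ≤ a i x) → 0 ≤ f x) :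
    ∃ y : ι → 𝕜, 0 ≤ y ∧ ∀ x, f x = ∑ i ∈ s, y i * a i x := by
  induction s using Finset.induction_on generalizing a f with
  | empty =>
    refine ⟨0, le_rfl, fun x => ?_⟩
    have h₁ := h x (by simp)
    have h₂ : f x ≤ 0 := by simpa using h (-x) (by simp)
    simpa using le_antisymm h₂ h₁
  | insert j s hj ih =>
    by_cases hs : ∀ x, (∀ i ∈ s, 0 ≤ a i x) → 0 ≤ f x
    · obtain ⟨y, hy, hf⟩ := ih a f hs
      exact ⟨Function.update y j 0, le_update_iff.2 ⟨le_rfl, fun i _ => hy i⟩, fun x => by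
        rw [Finset.sum_insert_update_mul hj, zero_mul, zero_add, hf]⟩
    push Not at hs
    obtain ⟨x₀, hx₀, hfx₀⟩ := hs
    have hajx₀ : a j x₀ < 0 := by
      by_contra! hpos
      exact hfx₀.not_ge (h x₀ (Finset.forall_mem_insert _ _ _ |>.2 ⟨hpos, hx₀⟩))
    let P : W →ₗ[𝕜] W := LinearMap.id - (a j x₀)⁻¹ • (a j).smulRight x₀
    have hP : ∀ (g : W →ₗ[𝕜] 𝕜) x, g (P x) = g x - a j x / a j x₀ * g x₀ := fun g x => by
      simp only [P, LinearMap.sub_apply, LinearMap.id_apply, LinearMap.smul_apply,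
        LinearMap.smulRight_apply, map_sub, map_smul, smul_eq_mul]
      ring
    have haP : ∀ x, a j (P x) = 0 := fun x => by
      rw [hP, div_mul_cancel₀ _ hajx₀.ne, sub_self]
    obtain ⟨y, hy, hf⟩ := ih (fun i => (a i).comp P) (f.comp P) fun x hx =>
      h (P x) (Finset.forall_mem_insert _ _ _ |>.2 ⟨(haP x).ge, hx⟩)
    set c := (f x₀ - ∑ i ∈ s, y i * a i x₀) / a j x₀
    have hc : 0 ≤ c := by
      refine div_nonneg_of_nonpos ?_ hajx₀.le
      have : 0 ≤ ∑ i ∈ s, y i * a i x₀ :=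
        Finset.sum_nonneg fun i hi => mul_nonneg (hy i) (hx₀ i hi)
      linarith
    refine ⟨Function.update y j c, le_update_iff.2 ⟨hc, fun i _ => hy i⟩, fun x => ?_⟩
    have hfx := hf x
    simp only [LinearMap.comp_apply, hP] at hfx
    have hsum : ∑ i ∈ s, y i * (a i x - a j x / a j x₀ * a i x₀)
        = ∑ i ∈ s, y i * a i x - a j x / a j x₀ * ∑ i ∈ s, y i * a i x₀ := by
      rw [Finset.mul_sum, ← Finset.sum_sub_distrib]
      exact Finset.sum_congr rfl fun i _ => by ring
    rw [hsum] at hfx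
    rw [Finset.sum_insert_update_mul hj]
    linear_combination hfx

variable {κ : Type*} [Fintype ι] [Fintype κ]

/- Homogenize: infeasibility of `A z ≤ b` says that `t ≤ 0` whenever `t b - A z ≥ 0`. -/
theorem exists_nonneg_dotProduct_eq_neg_one_of_not_exists_mulVec_le
    (A : Matrix ι κ 𝕜) (b : ι → 𝕜) (h : ¬∃ z, A *ᵥ z ≤ b) :
    ∃ y, 0 ≤ y ∧ Aᵀ *ᵥ y = 0 ∧ b ⬝ᵥ y = -1 := by
  classical
  let a : ι → ((κ → 𝕜) × 𝕜) →ₗ[𝕜] 𝕜 := fun i =>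
    b i • LinearMap.snd 𝕜 _ _ - (LinearMap.proj i).comp (A.mulVecLin.comp (LinearMap.fst 𝕜 _ _))
  have ha : ∀ i z t, a i (z, t) = b i * t - (A *ᵥ z) i := fun i z t => by simp [a]
  obtain ⟨y, hy, hf⟩ :=
    exists_nonneg_eq_sum_of_forall_nonneg Finset.univ a (-LinearMap.snd 𝕜 (κ → 𝕜) 𝕜) (by
      rintro ⟨z, t⟩ hzt
      by_contra! ht
      refine h ⟨t⁻¹ • z, fun i => ?_⟩
      have := hzt i (Finset.mem_univ i)
      rw [ha] at this
      simp only [LinearMap.neg_apply, LinearMap.snd_apply, Left.neg_neg_iff] at ht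
      rw [mulVec_smul, Pi.smul_apply, smul_eq_mul, inv_mul_le_iff₀ ht]
      linarith)
  simp only [ha, LinearMap.neg_apply, LinearMap.snd_apply] at hf
  refine ⟨y, hy, funext fun k => ?_, ?_⟩
  · have := hf (Pi.single k 1, 0)
    simp only [neg_zero, mul_zero, zero_sub, mul_neg, Finset.sum_neg_distrib,
      mulVec_single_one, zero_eq_neg] at this
    simpa [mulVec, dotProduct, mul_comm] using this
  · have := hf (0, 1)
    simp only [mul_one, mulVec_zero, Pi.zero_apply, sub_zero] at this
    simp [dotProduct, mul_comm, this]

theorem dotProduct_nonneg_of_mulVec_le {A : Matrix ι κ 𝕜} {b : ι → 𝕜} {z : κ → 𝕜}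
    {y : ι → 𝕜} (hz : A *ᵥ z ≤ b) (hy : 0 ≤ y) (hAy : Aᵀ *ᵥ y = 0) : 0 ≤ b ⬝ᵥ y :=
  calc 0 ≤ (b - A *ᵥ z) ⬝ᵥ y := dotProduct_nonneg_of_nonneg (sub_nonneg.2 hz) hy
    _ = b ⬝ᵥ y := by
      rw [sub_dotProduct, dotProduct_comm (A *ᵥ z), dotProduct_mulVec, ← mulVec_transpose, hAy,
        zero_dotProduct, sub_zero]

theorem exists_pos_smul_le_one {y : ι → 𝕜} (hy : 0 ≤ y) : ∃ c : 𝕜, 0 < c ∧ c • y ≤ 1 := by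
  have hsum : 0 ≤ ∑ i, y i := Finset.sum_nonneg fun i _ => hy i
  refine ⟨(1 + ∑ i, y i)⁻¹, by positivity, fun i => ?_⟩
  rw [Pi.smul_apply, smul_eq_mul, Pi.one_apply, inv_mul_le_one₀ (by positivity)]
  linarith [Finset.single_le_sum (fun j _ => hy j) (Finset.mem_univ i)]

theorem exists_nonneg_le_one_dotProduct_neg_iff (A : Matrix ι κ 𝕜) (b : ι → 𝕜) :
    (∃ w, 0 ≤ w ∧ w ≤ 1 ∧ Aᵀ *ᵥ w = 0 ∧ b ⬝ᵥ w < 0) ↔ ¬∃ z, A *ᵥ z ≤ b := by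
  constructor
  · rintro ⟨w, hw₀, -, hAw, hbw⟩ ⟨z, hz⟩
    exact hbw.not_ge (dotProduct_nonneg_of_mulVec_le hz hw₀ hAw)
  · intro h
    obtain ⟨y, hy, hAy, hby⟩ := exists_nonneg_dotProduct_eq_neg_one_of_not_exists_mulVec_le A b h
    obtain ⟨c, hc, hcy⟩ := exists_pos_smul_le_one hy
    refine ⟨c • y, smul_nonneg hc.le hy, hcy, by rw [mulVec_smul, hAy, smul_zero], ?_⟩
    rw [dotProduct_smul, hby, smul_eq_mul]
    linarith

end Farkas

theorem isCompact_setOf_nonneg_le_one_mulVec_eq_zero {ι κ : Type*} [Fintype ι]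
    (B : Matrix κ ι ℝ) : IsCompact {w : ι → ℝ | 0 ≤ w ∧ w ≤ 1 ∧ B *ᵥ w = 0} := by
  have hker : IsClosed {w : ι → ℝ | B *ᵥ w = 0} :=
    isClosed_eq (continuous_const.matrix_mulVec continuous_id) continuous_const
  rw [show {w : ι → ℝ | 0 ≤ w ∧ w ≤ 1 ∧ B *ᵥ w = 0} = Set.Icc 0 1 ∩ {w | B *ᵥ w = 0} from
    Set.ext fun _ => and_assoc.symm]
  exact isCompact_Icc.inter_right hker

theorem collision_detection_LP (m n : ℕ) (A : Matrix (Fin m) (Fin n) ℝ)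
    (b : Fin m → ℝ)
    (F : Set (Fin m → ℝ))
    (hF : F = {w | 0 ≤ w ∧ w ≤ (fun _ => 1) ∧ Aᵀ *ᵥ w = 0}) :
    F.Nonempty ∧ IsCompact F ∧
    ∃ w₀ ∈ F, (∀ w ∈ F, b ⬝ᵥ w₀ ≤ b ⬝ᵥ w) ∧ b ⬝ᵥ w₀ ≤ 0 ∧
      (b ⬝ᵥ w₀ < 0 ↔ ¬ ∃ z : Fin n → ℝ, A *ᵥ z ≤ b) := by
  subst hF
  have hzero : (0 : Fin m → ℝ) ∈ {w | 0 ≤ w ∧ w ≤ (fun _ => 1) ∧ Aᵀ *ᵥ w = 0} :=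
    ⟨le_rfl, zero_le_one, mulVec_zero _⟩
  have hcompact := isCompact_setOf_nonneg_le_one_mulVec_eq_zero Aᵀ
  obtain ⟨w₀, hw₀, hmin⟩ := hcompact.exists_isMinOn ⟨0, hzero⟩
    (continuous_const.dotProduct continuous_id).continuousOn
  rw [isMinOn_iff] at hmin
  refine ⟨⟨0, hzero⟩, hcompact, w₀, hw₀, hmin, by simpa using hmin 0 hzero, ?_⟩
  rw [← exists_nonneg_le_one_dotProduct_neg_iff]
  exact ⟨fun hneg => ⟨w₀, hw₀.1, hw₀.2.1, hw₀.2.2, hneg⟩,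
    fun ⟨w, hw_nonneg, hw_le, hAw, hbw⟩ => (hmin w ⟨hw_nonneg, hw_le, hAw⟩).trans_lt hbw⟩
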